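/- Suppose B ≥ 0 is such that p_Ψ(x) ≤ B for all x ∈ ℝⁿ. Then for all x, y ∈ ℝⁿ, |d_λ(x, y) − ‖x − y‖| ≤ (max(p₀, B)/λ) · ‖x − y‖. Consequently, for every fixed x, y ∈ ℝⁿ, d_λ(x, y) converges to the Euclidean distance ‖x − y‖ as λ → ∞. -/

import Mathlib

open MeasureTheory Set Filter

/-- The conformal factor `f_λ(x) := (p₀ + λ)/(p_Ψ(x) + λ)`. -/
noncomputable def fconf {n : ℕ} (p₀ lam : ℝ) (pPsi : EuclideanSpace ℝ (Fin n) → ℝ)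
    (x : EuclideanSpace ℝ (Fin n)) : ℝ :=
  (p₀ + lam) / (pPsi x + lam)

/-- The generative length of a path `γ : [0,1] → ℝⁿ`,
`L_λ(γ) := ∫₀¹ f_λ(γ(t)) ⬝ ‖γ'(t)‖ dt`. -/
noncomputable def genLength {n : ℕ} (p₀ lam : ℝ) (pPsi : EuclideanSpace ℝ (Fin n) → ℝ)
    (γ : ℝ → EuclideanSpace ℝ (Fin n)) : ℝ :=
  ∫ t in (0:ℝ)..1, fconf p₀ lam pPsi (γ t) * ‖deriv γ t‖

/-- The generative distance `d_λ(x,y)`: the infimum of `L_λ(γ)` over all C¹ paths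
`γ` with `γ 0 = x` and `γ 1 = y`. -/
noncomputable def genDist {n : ℕ} (p₀ lam : ℝ) (pPsi : EuclideanSpace ℝ (Fin n) → ℝ)
    (x y : EuclideanSpace ℝ (Fin n)) : ℝ :=
  sInf {L : ℝ | ∃ γ : ℝ → EuclideanSpace ℝ (Fin n),
    ContDiff ℝ 1 γ ∧ γ 0 = x ∧ γ 1 = y ∧ genLength p₀ lam pPsi γ = L}

/-!
The conformal factor is squeezed between `(p₀ + λ)/(B + λ)` and `(p₀ + λ)/λ`, both within
`max(p₀, B)/λ` of `1`. Every path is at least as long as its chord, and the straight segment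
attains the chord, so `d_λ(x, y)` lies between these two multiples of `‖x - y‖`.
-/

section Paths

variable {E : Type*} [NormedAddCommGroup E] [NormedSpace ℝ E] [CompleteSpace E]

theorem norm_sub_le_integral_norm_deriv {γ : ℝ → E} (hγ : ContDiff ℝ 1 γ) {a b : ℝ}
    (hab : a ≤ b) : ‖γ b - γ a‖ ≤ ∫ t in a..b, ‖deriv γ t‖ := by
  rw [← intervalIntegral.integral_deriv_eq_sub (fun t _ => hγ.differentiable one_ne_zero t)
    ((hγ.continuous_deriv le_rfl).intervalIntegrable a b)]
  exact intervalIntegral.norm_integral_le_integral_norm hab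

theorem mul_norm_sub_le_integral_mul_norm_deriv {γ : ℝ → E} (hγ : ContDiff ℝ 1 γ)
    {w : ℝ → ℝ} (hw : Continuous w) {c a b : ℝ} (hab : a ≤ b) (hc : 0 ≤ c)
    (hcw : ∀ t ∈ Icc a b, c ≤ w t) :
    c * ‖γ b - γ a‖ ≤ ∫ t in a..b, w t * ‖deriv γ t‖ := by
  have hγ' : Continuous fun t => ‖deriv γ t‖ := (hγ.continuous_deriv le_rfl).norm
  calc c * ‖γ b - γ a‖ ≤ c * ∫ t in a..b, ‖deriv γ t‖ :=
        mul_le_mul_of_nonneg_left (norm_sub_le_integral_norm_deriv hγ hab) hc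
    _ = ∫ t in a..b, c * ‖deriv γ t‖ := (intervalIntegral.integral_const_mul _ _).symm
    _ ≤ ∫ t in a..b, w t * ‖deriv γ t‖ :=
        intervalIntegral.integral_mono_on hab ((continuous_const.mul hγ').intervalIntegrable _ _)
          ((hw.mul hγ').intervalIntegrable _ _)
          fun t ht => mul_le_mul_of_nonneg_right (hcw t ht) (norm_nonneg _)

end Paths

section GenerativeDistance

variable {n : ℕ} {p₀ lam B : ℝ} {pPsi : EuclideanSpace ℝ (Fin n) → ℝ}

theorem fconf_nonneg (hp₀ : 0 ≤ p₀) (hlam : 0 < lam) {x : EuclideanSpace ℝ (Fin n)}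
    (hx : 0 ≤ pPsi x) : 0 ≤ fconf p₀ lam pPsi x := by
  unfold fconf
  positivity

theorem div_add_le_fconf (hp₀ : 0 ≤ p₀) (hlam : 0 < lam) {x : EuclideanSpace ℝ (Fin n)}
    (hx : 0 ≤ pPsi x) (hxB : pPsi x ≤ B) : (p₀ + lam) / (B + lam) ≤ fconf p₀ lam pPsi x :=
  div_le_div_of_nonneg_left (by linarith) (by linarith) (by linarith)

theorem fconf_le_div (hp₀ : 0 ≤ p₀) (hlam : 0 < lam) {x : EuclideanSpace ℝ (Fin n)}
    (hx : 0 ≤ pPsi x) : fconf p₀ lam pPsi x ≤ (p₀ + lam) / lam :=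
  div_le_div_of_nonneg_left (by linarith) hlam (by linarith)

theorem continuous_fconf (hlam : 0 < lam) (hcont : Continuous pPsi)
    (hnonneg : ∀ x, 0 ≤ pPsi x) : Continuous (fconf p₀ lam pPsi) :=
  continuous_const.div (hcont.add continuous_const) fun x => by linarith [hnonneg x]

theorem genLength_nonneg (hp₀ : 0 ≤ p₀) (hlam : 0 < lam) (hnonneg : ∀ x, 0 ≤ pPsi x)
    (γ : ℝ → EuclideanSpace ℝ (Fin n)) : 0 ≤ genLength p₀ lam pPsi γ :=
  intervalIntegral.integral_nonneg zero_le_one fun _ _ =>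
    mul_nonneg (fconf_nonneg hp₀ hlam (hnonneg _)) (norm_nonneg _)

theorem div_add_mul_norm_sub_le_genLength (hp₀ : 0 ≤ p₀) (hlam : 0 < lam)
    (hcont : Continuous pPsi) (hnonneg : ∀ x, 0 ≤ pPsi x) (hbd : ∀ x, pPsi x ≤ B)
    {γ : ℝ → EuclideanSpace ℝ (Fin n)} (hγ : ContDiff ℝ 1 γ) :
    (p₀ + lam) / (B + lam) * ‖γ 1 - γ 0‖ ≤ genLength p₀ lam pPsi γ := by
  have hB : 0 ≤ B := (hnonneg 0).trans (hbd 0)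
  exact mul_norm_sub_le_integral_mul_norm_deriv hγ
    ((continuous_fconf hlam hcont hnonneg).comp hγ.continuous) zero_le_one (by positivity)
    fun _ _ => div_add_le_fconf hp₀ hlam (hnonneg _) (hbd _)

theorem genLength_lineMap_le (hp₀ : 0 ≤ p₀) (hlam : 0 < lam) (hcont : Continuous pPsi)
    (hnonneg : ∀ x, 0 ≤ pPsi x) (x y : EuclideanSpace ℝ (Fin n)) :
    genLength p₀ lam pPsi (AffineMap.lineMap x y) ≤ (p₀ + lam) / lam * ‖y - x‖ := by
  have hderiv : ∀ t : ℝ, deriv (AffineMap.lineMap x y : ℝ → _) t = y - x :=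
    fun _ => AffineMap.hasDerivAt_lineMap.deriv
  have hf : Continuous fun t : ℝ => fconf p₀ lam pPsi (AffineMap.lineMap x y t) :=
    (continuous_fconf hlam hcont hnonneg).comp AffineMap.lineMap_continuous
  unfold genLength
  simp only [hderiv, intervalIntegral.integral_mul_const]
  gcongr
  calc ∫ t in (0 : ℝ)..1, fconf p₀ lam pPsi (AffineMap.lineMap x y t)
      ≤ ∫ _ in (0 : ℝ)..1, (p₀ + lam) / lam :=
        intervalIntegral.integral_mono_on zero_le_one (hf.intervalIntegrable _ _)
          intervalIntegrable_const fun _ _ => fconf_le_div hp₀ hlam (hnonneg _)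
    _ = (p₀ + lam) / lam := by simp

theorem genDist_le (hp₀ : 0 ≤ p₀) (hlam : 0 < lam) (hcont : Continuous pPsi)
    (hnonneg : ∀ x, 0 ≤ pPsi x) (x y : EuclideanSpace ℝ (Fin n)) :
    genDist p₀ lam pPsi x y ≤ (p₀ + lam) / lam * ‖x - y‖ := by
  have hbdd : BddBelow {L : ℝ | ∃ γ : ℝ → EuclideanSpace ℝ (Fin n),
      ContDiff ℝ 1 γ ∧ γ 0 = x ∧ γ 1 = y ∧ genLength p₀ lam pPsi γ = L} := by
    refine ⟨0, ?_⟩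
    rintro _ ⟨γ, -, -, -, rfl⟩
    exact genLength_nonneg hp₀ hlam hnonneg γ
  rw [norm_sub_rev]
  exact (csInf_le hbdd ⟨_, AffineMap.contDiff_lineMap x y, AffineMap.lineMap_apply_zero x y,
    AffineMap.lineMap_apply_one x y, rfl⟩).trans (genLength_lineMap_le hp₀ hlam hcont hnonneg x y)

theorem div_add_mul_norm_sub_le_genDist (hp₀ : 0 ≤ p₀) (hlam : 0 < lam)
    (hcont : Continuous pPsi) (hnonneg : ∀ x, 0 ≤ pPsi x) (hbd : ∀ x, pPsi x ≤ B)
    (x y : EuclideanSpace ℝ (Fin n)) :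
    (p₀ + lam) / (B + lam) * ‖x - y‖ ≤ genDist p₀ lam pPsi x y := by
  refine le_csInf ⟨_, _, AffineMap.contDiff_lineMap x y, AffineMap.lineMap_apply_zero x y,
    AffineMap.lineMap_apply_one x y, rfl⟩ ?_
  rintro _ ⟨γ, hγ, rfl, rfl, rfl⟩
  rw [norm_sub_rev]
  exact div_add_mul_norm_sub_le_genLength hp₀ hlam hcont hnonneg hbd hγ

theorem abs_genDist_sub_norm_le (hp₀ : 0 ≤ p₀) (hlam : 0 < lam) (hcont : Continuous pPsi)
    (hnonneg : ∀ x, 0 ≤ pPsi x) (hbd : ∀ x, pPsi x ≤ B) (x y : EuclideanSpace ℝ (Fin n)) :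
    |genDist p₀ lam pPsi x y - ‖x - y‖| ≤ max p₀ B / lam * ‖x - y‖ := by
  have hB : 0 ≤ B := (hnonneg 0).trans (hbd 0)
  have hlower : 1 - max p₀ B / lam ≤ (p₀ + lam) / (B + lam) := by
    calc 1 - max p₀ B / lam ≤ 1 - B / lam := by gcongr; exact le_max_right p₀ B
      _ ≤ 1 - B / (B + lam) := by gcongr; linarith
      _ = lam / (B + lam) := by field_simp; ring
      _ ≤ (p₀ + lam) / (B + lam) := by gcongr; linarith
  have hupper : (p₀ + lam) / lam ≤ 1 + max p₀ B / lam := by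
    rw [add_div, div_self hlam.ne', add_comm]
    gcongr
    exact le_max_left p₀ B
  have hxy := norm_nonneg (x - y)
  rw [abs_sub_le_iff]
  constructor
  · nlinarith [genDist_le (pPsi := pPsi) hp₀ hlam hcont hnonneg x y]
  · nlinarith [div_add_mul_norm_sub_le_genDist hp₀ hlam hcont hnonneg hbd x y]

theorem tendsto_genDist_atTop (hp₀ : 0 ≤ p₀) (hcont : Continuous pPsi)
    (hnonneg : ∀ x, 0 ≤ pPsi x) (hbd : ∀ x, pPsi x ≤ B) (x y : EuclideanSpace ℝ (Fin n)) :
    Tendsto (fun lam => genDist p₀ lam pPsi x y) atTop (nhds ‖x - y‖) := by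
  rw [tendsto_iff_dist_tendsto_zero]
  have hbound : Tendsto (fun lam => max p₀ B / lam * ‖x - y‖) atTop (nhds 0) := by
    simpa using (tendsto_const_nhds.div_atTop tendsto_id).mul_const ‖x - y‖
  refine squeeze_zero' (Eventually.of_forall fun _ => dist_nonneg) ?_ hbound
  filter_upwards [eventually_gt_atTop 0] with lam hlam
  exact abs_genDist_sub_norm_le hp₀ hlam hcont hnonneg hbd x y

end GenerativeDistance

theorem genDist_tendsto_euclidean_general {n : ℕ}
    (p₀ : ℝ) (hp₀ : 0 < p₀)
    (pPsi : EuclideanSpace ℝ (Fin n) → ℝ) (hcont : Continuous pPsi)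
    (hnonneg : ∀ x, 0 ≤ pPsi x)
    (B : ℝ) (hbd : ∀ x, pPsi x ≤ B) :
    (∀ lam : ℝ, 0 < lam → ∀ x y : EuclideanSpace ℝ (Fin n),
      |genDist p₀ lam pPsi x y - ‖x - y‖| ≤ max p₀ B / lam * ‖x - y‖) ∧
    (∀ x y : EuclideanSpace ℝ (Fin n),
      Tendsto (fun lam : ℝ => genDist p₀ lam pPsi x y) atTop (nhds ‖x - y‖)) :=
  ⟨fun _ hlam => abs_genDist_sub_norm_le hp₀.le hlam hcont hnonneg hbd,
    tendsto_genDist_atTop hp₀.le hcont hnonneg hbd⟩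

/-- if `p_Ψ ≤ B`, then for every `λ > 0`,
`|d_λ(x,y) − ‖x − y‖| ≤ (max(p₀,B)/λ) ⬝ ‖x − y‖`; consequently `d_λ(x,y) → ‖x − y‖`
as `λ → ∞`. -/
theorem genDist_tendsto_euclidean {n : ℕ} (hn : 1 ≤ n)
    (p₀ : ℝ) (hp₀ : 0 < p₀)
    (pPsi : EuclideanSpace ℝ (Fin n) → ℝ) (hcont : Continuous pPsi)
    (hnonneg : ∀ x, 0 ≤ pPsi x)
    (B : ℝ) (hB : 0 ≤ B) (hbd : ∀ x, pPsi x ≤ B) :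
    (∀ lam : ℝ, 0 < lam → ∀ x y : EuclideanSpace ℝ (Fin n),
      |genDist p₀ lam pPsi x y - ‖x - y‖| ≤ max p₀ B / lam * ‖x - y‖) ∧
    (∀ x y : EuclideanSpace ℝ (Fin n),
      Tendsto (fun lam : ℝ => genDist p₀ lam pPsi x y) atTop (nhds ‖x - y‖)) :=
  genDist_tendsto_euclidean_general p₀ hp₀ pPsi hcont hnonneg B hbd
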